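/- (Theorem 3.1, case d=1; Born–Faddeev-type leading asymptotics.) There exist constants C > 0 and κ₀ > 0 such that for all κ ≥ κ₀ the matrix A(κ) is invertible and for all k, ℓ ∈ {−κ, κ} one has |f(k,ℓ) − Σ_{j=1}^n (−1/(2π α_j)) e^{i(k−ℓ) y_j}| ≤ C κ^{−1}. -/

import Mathlib

/-!
Write `A(κ) = diag α + G(κ)`, where every entry of `G(κ)` has modulus `1/(2κ)`. In the sup norm
`diag α` is bounded below by `1/‖α⁻¹‖` and `G(κ)` is bounded above by `n/(2κ)`, so for
`κ ≥ n‖α⁻¹‖` the sum satisfies `‖v‖ ≤ 2‖α⁻¹‖ ‖A(κ) v‖`; in particular `A(κ)` is invertible.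
The Born vector `q₀ = diag(α)⁻¹ b` solves `A(κ) q₀ = b + G(κ) q₀`, hence
`‖q(k) - q₀‖ ≤ 2‖α⁻¹‖ ‖G(κ) q₀‖ ≤ n‖α⁻¹‖²/κ`, and the leading term of `f(k,ℓ)` is exactly
the amplitude computed from `q₀`.
-/

open Complex Finset Matrix

noncomputable section

/-- The matrix `A(κ)` for a one-dimensional multipoint potential:
`A(κ)_{jj} = α_j + 1/(2iκ)`, `A(κ)_{jj'} = e^{iκ|y_j - y_{j'}|}/(2iκ)` for `j ≠ j'`. -/
def A1 (n : ℕ) (y : Fin n → ℝ) (α : Fin n → ℂ) (κ : ℝ) : Matrix (Fin n) (Fin n) ℂ :=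
  fun j j' => (if j = j' then α j else 0) +
    Complex.exp (Complex.I * κ * |y j - y j'|) / (2 * Complex.I * κ)

/-- `q(k) = A(κ)⁻¹ b(k)` with `b(k)_j = -e^{i k y_j}`. -/
def q1 (n : ℕ) (y : Fin n → ℝ) (α : Fin n → ℂ) (κ k : ℝ) : Fin n → ℂ :=
  (A1 n y α κ)⁻¹ *ᵥ fun j => -Complex.exp (Complex.I * k * y j)

/-- The scattering amplitude `f(k,ℓ) = (2π)⁻¹ Σ_j q_j(k) e^{-iℓ y_j}`. -/
def f1 (n : ℕ) (y : Fin n → ℝ) (α : Fin n → ℂ) (κ k ℓ : ℝ) : ℂ :=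
  (2 * Real.pi : ℂ)⁻¹ * ∑ j, q1 n y α κ k j * Complex.exp (-Complex.I * ℓ * y j)

section LowerBounds

variable {ι : Type*} [Fintype ι]

theorem norm_dotProduct_le_of_norm_le {R : Type*} [SeminormedRing R] {u : ι → R} {c : ℝ}
    (hu : ∀ j, ‖u j‖ ≤ c) (v : ι → R) : ‖u ⬝ᵥ v‖ ≤ Fintype.card ι * c * ‖v‖ :=
  calc ‖u ⬝ᵥ v‖ ≤ ∑ j, ‖u j * v j‖ := norm_sum_le _ _
    _ ≤ ∑ _j : ι, c * ‖v‖ := sum_le_sum fun j _ => (norm_mul_le _ _).trans <|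
        mul_le_mul (hu j) (norm_le_pi_norm v j) (norm_nonneg _) ((norm_nonneg _).trans (hu j))
    _ = Fintype.card ι * c * ‖v‖ := by simp [mul_assoc]

theorem norm_mulVec_le_of_norm_apply_le {ι' R : Type*} [Fintype ι'] [SeminormedRing R]
    {M : Matrix ι' ι R} {c : ℝ} (hc : 0 ≤ c) (hM : ∀ i j, ‖M i j‖ ≤ c) (v : ι → R) :
    ‖M *ᵥ v‖ ≤ Fintype.card ι * c * ‖v‖ :=
  (pi_norm_le_iff_of_nonneg (by positivity)).2 fun i => norm_dotProduct_le_of_norm_le (hM i) v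

theorem norm_le_norm_inv_mul_norm_diagonal_mulVec {K : Type*} [NormedDivisionRing K] [DecidableEq ι]
    {d : ι → K} (hd : ∀ i, d i ≠ 0) (v : ι → K) : ‖v‖ ≤ ‖d⁻¹‖ * ‖diagonal d *ᵥ v‖ := by
  have hv : v = d⁻¹ * (diagonal d *ᵥ v) := by
    ext i
    simp [mulVec_diagonal, inv_mul_cancel_left₀ (hd i)]
  calc ‖v‖ = ‖d⁻¹ * (diagonal d *ᵥ v)‖ := by rw [← hv]
    _ ≤ ‖d⁻¹‖ * ‖diagonal d *ᵥ v‖ := norm_mul_le _ _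

theorem norm_le_two_mul_norm_add_of_le_mul_norm {V W : Type*} [SeminormedAddCommGroup V]
    [SeminormedAddCommGroup W] {f e : V → W} {m ε : ℝ} (hm : 0 ≤ m)
    (hf : ∀ w, ‖w‖ ≤ m * ‖f w‖) (he : ∀ w, ‖e w‖ ≤ ε * ‖w‖) (hmε : m * ε ≤ 1 / 2) (w : V) :
    ‖w‖ ≤ 2 * m * ‖f w + e w‖ := by
  have h₁ := hf w
  have h₂ : m * ‖f w‖ ≤ m * ‖f w + e w‖ + m * (ε * ‖w‖) := by
    rw [← mul_add]
    exact mul_le_mul_of_nonneg_left ((norm_le_add_norm_add _ _).trans (by gcongr; exact he w)) hm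
  nlinarith [norm_nonneg w]

theorem Matrix.isUnit_of_norm_le_mul_norm_mulVec {K : Type*} [NormedField K] [DecidableEq ι]
    {A : Matrix ι ι K} {c : ℝ} (h : ∀ v, ‖v‖ ≤ c * ‖A *ᵥ v‖) : IsUnit A := by
  rw [isUnit_iff_isUnit_det, isUnit_iff_ne_zero]
  intro hdet
  obtain ⟨v, hv, hAv⟩ := exists_mulVec_eq_zero_iff.2 hdet
  exact hv (norm_le_zero_iff.1 (by simpa [hAv] using h v))

theorem Matrix.norm_inv_mulVec_sub_le {K : Type*} [NormedField K] [DecidableEq ι]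
    {D E : Matrix ι ι K} {c : ℝ} (h : ∀ v, ‖v‖ ≤ c * ‖(D + E) *ᵥ v‖) {b q₀ : ι → K}
    (hq₀ : D *ᵥ q₀ = b) : ‖(D + E)⁻¹ *ᵥ b - q₀‖ ≤ c * ‖E *ᵥ q₀‖ := by
  have hdet : IsUnit (D + E).det :=
    (isUnit_iff_isUnit_det _).1 (isUnit_of_norm_le_mul_norm_mulVec h)
  have hres : (D + E) *ᵥ ((D + E)⁻¹ *ᵥ b - q₀) = -(E *ᵥ q₀) := by
    rw [mulVec_sub, mulVec_mulVec, mul_nonsing_inv _ hdet, one_mulVec, add_mulVec, hq₀]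
    abel
  simpa [hres] using h ((D + E)⁻¹ *ᵥ b - q₀)

end LowerBounds

section Scattering

def greenMatrix (n : ℕ) (y : Fin n → ℝ) (κ : ℝ) : Matrix (Fin n) (Fin n) ℂ :=
  of fun j j' => Complex.exp (Complex.I * κ * |y j - y j'|) / (2 * Complex.I * κ)

def bornVector (n : ℕ) (y : Fin n → ℝ) (α : Fin n → ℂ) (k : ℝ) : Fin n → ℂ :=
  fun j => -Complex.exp (Complex.I * k * y j) / α j

variable {n : ℕ} {y : Fin n → ℝ} {α : Fin n → ℂ} {κ : ℝ}

theorem A1_eq_diagonal_add_greenMatrix : A1 n y α κ = diagonal α + greenMatrix n y κ := by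
  ext j j'
  simp [A1, greenMatrix, diagonal_apply]

theorem norm_greenMatrix_apply (hκ : 0 < κ) (j j' : Fin n) :
    ‖greenMatrix n y κ j j'‖ = (2 * κ)⁻¹ := by
  simp [greenMatrix, Complex.norm_exp, abs_of_pos hκ]

theorem norm_le_mul_norm_A1_mulVec (hα : ∀ j, α j ≠ 0) (hκ : 0 < κ) (hκα : n * ‖α⁻¹‖ ≤ κ)
    (v : Fin n → ℂ) : ‖v‖ ≤ 2 * ‖α⁻¹‖ * ‖A1 n y α κ *ᵥ v‖ := by
  rw [A1_eq_diagonal_add_greenMatrix, add_mulVec]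
  refine norm_le_two_mul_norm_add_of_le_mul_norm (norm_nonneg _)
    (norm_le_norm_inv_mul_norm_diagonal_mulVec hα)
    (norm_mulVec_le_of_norm_apply_le (by positivity) fun j j' =>
      (norm_greenMatrix_apply hκ j j').le) ?_ v
  rw [Fintype.card_fin]
  field_simp
  linarith

theorem norm_bornVector_le (k : ℝ) : ‖bornVector n y α k‖ ≤ ‖α⁻¹‖ := by
  refine (pi_norm_le_iff_of_nonneg (norm_nonneg _)).2 fun j => ?_
  have hj : ‖bornVector n y α k j‖ = ‖α⁻¹ j‖ := by
    simp [bornVector, Complex.norm_exp]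
  exact hj ▸ norm_le_pi_norm α⁻¹ j

theorem norm_q1_sub_bornVector_le (hα : ∀ j, α j ≠ 0) (hκ : 0 < κ) (hκα : n * ‖α⁻¹‖ ≤ κ)
    (k : ℝ) : ‖q1 n y α κ k - bornVector n y α k‖ ≤ n * ‖α⁻¹‖ ^ 2 / κ := by
  have hborn : diagonal α *ᵥ bornVector n y α k = fun j => -Complex.exp (Complex.I * k * y j) := by
    ext j
    simp [mulVec_diagonal, bornVector, mul_div_cancel₀ _ (hα j)]
  have hstable := norm_le_mul_norm_A1_mulVec (y := y) hα hκ hκα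
  rw [A1_eq_diagonal_add_greenMatrix] at hstable
  calc ‖q1 n y α κ k - bornVector n y α k‖
      ≤ 2 * ‖α⁻¹‖ * ‖greenMatrix n y κ *ᵥ bornVector n y α k‖ := by
        rw [q1, A1_eq_diagonal_add_greenMatrix]
        exact norm_inv_mulVec_sub_le hstable hborn
    _ ≤ 2 * ‖α⁻¹‖ * (n * (2 * κ)⁻¹ * ‖α⁻¹‖) := by
        gcongr
        refine (norm_mulVec_le_of_norm_apply_le (by positivity)
          (fun j j' => (norm_greenMatrix_apply hκ j j').le) _).trans ?_
        rw [Fintype.card_fin]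
        gcongr
        exact norm_bornVector_le k
    _ = n * ‖α⁻¹‖ ^ 2 / κ := by field_simp

theorem f1_sub_born_eq (k ℓ : ℝ) :
    f1 n y α κ k ℓ - ∑ j, (-1 / (2 * Real.pi * α j)) * Complex.exp (Complex.I * (k - ℓ) * y j) =
      (2 * Real.pi : ℂ)⁻¹ * ((fun j => Complex.exp (-Complex.I * ℓ * y j)) ⬝ᵥ
        (q1 n y α κ k - bornVector n y α k)) := by
  have hterm : ∀ j, (-1 / (2 * Real.pi * α j)) * Complex.exp (Complex.I * (k - ℓ) * y j) =
      (2 * Real.pi : ℂ)⁻¹ * (bornVector n y α k j * Complex.exp (-Complex.I * ℓ * y j)) := by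
    intro j
    have hexp : Complex.exp (Complex.I * (k - ℓ) * y j) =
        Complex.exp (Complex.I * k * y j) * Complex.exp (-Complex.I * ℓ * y j) := by
      rw [← Complex.exp_add]; ring_nf
    rw [hexp, bornVector]
    ring
  simp only [f1, hterm, ← mul_sum, ← mul_sub, ← sum_sub_distrib, dotProduct, Pi.sub_apply]
  congr 1
  exact sum_congr rfl fun j _ => by ring

theorem norm_f1_sub_born_le (k ℓ : ℝ) :
    ‖f1 n y α κ k ℓ - ∑ j, (-1 / (2 * Real.pi * α j)) * Complex.exp (Complex.I * (k - ℓ) * y j)‖ ≤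
      n * ‖q1 n y α κ k - bornVector n y α k‖ := by
  have hπ : ‖(2 * Real.pi : ℂ)⁻¹‖ ≤ 1 := by
    rw [norm_inv, norm_mul, Complex.norm_real, Real.norm_of_nonneg Real.pi_pos.le]
    exact inv_le_one_of_one_le₀ (by norm_num; linarith [Real.pi_gt_three])
  have hexp : ∀ j, ‖Complex.exp (-Complex.I * ℓ * y j)‖ ≤ 1 := fun j => by
    simp [Complex.norm_exp]
  rw [f1_sub_born_eq, norm_mul]
  calc _ ≤ 1 * (Fintype.card (Fin n) * 1 * ‖q1 n y α κ k - bornVector n y α k‖) := by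
        gcongr
        exact norm_dotProduct_le_of_norm_le hexp _
    _ = n * ‖q1 n y α κ k - bornVector n y α k‖ := by simp

end Scattering

theorem stmt0 (n : ℕ) (y : Fin n → ℝ) (α : Fin n → ℂ)
    (hα : ∀ j, α j ≠ 0) :
    ∃ C > (0 : ℝ), ∃ κ₀ > (0 : ℝ), ∀ κ ≥ κ₀, IsUnit (A1 n y α κ) ∧
      ∀ k ℓ : ℝ, (k = κ ∨ k = -κ) → (ℓ = κ ∨ ℓ = -κ) →
        ‖f1 n y α κ k ℓ - ∑ j, (-1 / (2 * Real.pi * α j)) *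
            Complex.exp (Complex.I * (k - ℓ) * y j)‖ ≤ C / κ := by
  refine ⟨n ^ 2 * ‖α⁻¹‖ ^ 2 + 1, by positivity, n * ‖α⁻¹‖ + 1, by positivity, fun κ hκ => ?_⟩
  have hκα : n * ‖α⁻¹‖ ≤ κ := by linarith
  have hκ : 0 < κ := by linarith [show 0 ≤ n * ‖α⁻¹‖ by positivity]
  refine ⟨isUnit_of_norm_le_mul_norm_mulVec (norm_le_mul_norm_A1_mulVec hα hκ hκα),
    fun k ℓ _ _ => ?_⟩
  calc _ ≤ n * ‖q1 n y α κ k - bornVector n y α k‖ := norm_f1_sub_born_le k ℓ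
    _ ≤ n * (n * ‖α⁻¹‖ ^ 2 / κ) := by gcongr; exact norm_q1_sub_bornVector_le hα hκ hκα k
    _ ≤ (n ^ 2 * ‖α⁻¹‖ ^ 2 + 1) / κ := by
        rw [← mul_div_assoc]
        gcongr
        linarith [show (n : ℝ) * (n * ‖α⁻¹‖ ^ 2) = n ^ 2 * ‖α⁻¹‖ ^ 2 by ring]
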